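/- arXiv:1307.3143 — 2 statements merged into one kernel-verified Lean document; each statement's English description precedes it below -/
import Mathlib

section
/- If q : E → B is a quasifibration with contractible total space E, with B path-connected and based at b, then the connecting map of the quasifibration gives a weak homotopy equivalence F → ΩB from the fiber F = q⁻¹(b) to the loop space of B; that is, π_n(F) ≅ π_{n+1}(B) for all n ≥ 0. -/
open unitInterval

/-- The `n`-cube `I^n`. -/
abbrev Cb (n : ℕ) : Type := Fin n → unitInterval

/-- The boundary `∂I^n` of the `n`-cube. -/
def cbBoundary (n : ℕ) : Set (Cb n) := {t | ∃ i, t i = 0 ∨ t i = 1}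

/-- Based maps `(I^n, ∂I^n) → (X, x)`. -/
abbrev BasedLoop (n : ℕ) (X : Type*) [TopologicalSpace X] (x : X) : Type _ :=
  {f : C(Cb n, X) // ∀ t ∈ cbBoundary n, f t = x}

/-- Based homotopy of based maps from the `n`-cube. -/
def BasedHtpy {n : ℕ} {X : Type*} [TopologicalSpace X] {x : X}
    (f g : BasedLoop n X x) : Prop :=
  ∃ H : C(Cb n × unitInterval, X),
    (∀ t, H (t, 0) = f.1 t) ∧ (∀ t, H (t, 1) = g.1 t) ∧
      ∀ s : unitInterval, ∀ t ∈ cbBoundary n, H (t, s) = x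

/-- The `n`-th homotopy group (as a set) of a pointed space. -/
def PiGrp (n : ℕ) (X : Type*) [TopologicalSpace X] (x : X) : Type _ :=
  Quot (@BasedHtpy n X _ x)

/-- The induced map on homotopy groups of a based continuous map. -/
def piMap {X Y : Type*} [TopologicalSpace X] [TopologicalSpace Y] (f : C(X, Y))
    {x : X} {y : Y} (hf : f x = y) (n : ℕ) : PiGrp n X x → PiGrp n Y y :=
  Quot.lift
    (fun p => Quot.mk _ ⟨f.comp p.1, fun t ht => by
      rw [ContinuousMap.comp_apply, p.2 t ht, hf]⟩)
    (fun a b h => by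
      obtain ⟨H, h0, h1, hb⟩ := h
      exact Quot.sound ⟨f.comp H,
        fun t => by simp [h0 t],
        fun t => by simp [h1 t],
        fun s t ht => by simp [hb s t ht, hf]⟩)

/-- A continuous map is a weak homotopy equivalence if it is surjective on path
components and induces bijections on all homotopy groups at all basepoints
(the case `n = 0` giving injectivity on path components). -/
def IsWeakHomotopyEquiv {X Y : Type*} [TopologicalSpace X] [TopologicalSpace Y]
    (f : C(X, Y)) : Prop :=
  (∀ y : Y, ∃ x : X, Joined (f x) y) ∧
    ∀ (x : X) (n : ℕ), Function.Bijective (@piMap X Y _ _ f x (f x) rfl n)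

/-- A Hurewicz fibration: a continuous map with the homotopy lifting property
with respect to all topological spaces. -/
def IsHurewiczFibration {E B : Type*} [TopologicalSpace E] [TopologicalSpace B]
    (p : E → B) : Prop :=
  Continuous p ∧
    ∀ (Z : Type) [TopologicalSpace Z] (g : Z → E) (Ht : Z × unitInterval → B),
      Continuous g → Continuous Ht → (∀ z, Ht (z, 0) = p (g z)) →
      ∃ Gt : Z × unitInterval → E, Continuous Gt ∧ (∀ z, Gt (z, 0) = g z) ∧
        ∀ w, p (Gt w) = Ht w

/-- The subset `J^{n-1} ⊂ ∂I^n`: all faces except the interior of the face `t_n = 0`. -/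
def Jset (n : ℕ) : Set (Cb n) :=
  {t | (∃ i : Fin n, (i : ℕ) + 1 < n ∧ (t i = 0 ∨ t i = 1)) ∨
    ∃ i : Fin n, (i : ℕ) + 1 = n ∧ t i = 1}

/-- Relative maps `(I^n, ∂I^n, J^{n-1}) → (X, A, x)`. -/
abbrev RelLoop (n : ℕ) (X : Type*) [TopologicalSpace X] (A : Set X) (x : X) : Type _ :=
  {f : C(Cb n, X) // (∀ t ∈ cbBoundary n, f t ∈ A) ∧ ∀ t ∈ Jset n, f t = x}

/-- Homotopy of maps of triples `(I^n, ∂I^n, J^{n-1}) → (X, A, x)`. -/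
def RelHtpy {n : ℕ} {X : Type*} [TopologicalSpace X] {A : Set X} {x : X}
    (f g : RelLoop n X A x) : Prop :=
  ∃ H : C(Cb n × unitInterval, X),
    (∀ t, H (t, 0) = f.1 t) ∧ (∀ t, H (t, 1) = g.1 t) ∧
      ∀ s : unitInterval, (∀ t ∈ cbBoundary n, H (t, s) ∈ A) ∧ ∀ t ∈ Jset n, H (t, s) = x

/-- The `n`-th relative homotopy set `π_n(X, A, x)`. -/
def RelPi (n : ℕ) (X : Type*) [TopologicalSpace X] (A : Set X) (x : X) : Type _ :=
  Quot (@RelHtpy n X _ A x)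

/-- The natural map `π_n(X, q⁻¹(y), x) → π_n(Y, y)` induced by `q`. -/
def qStar {X Y : Type*} [TopologicalSpace X] [TopologicalSpace Y] (q : C(X, Y))
    (y : Y) (x : X) (n : ℕ) : RelPi n X (q ⁻¹' {y}) x → PiGrp n Y y :=
  Quot.lift
    (fun p => Quot.mk _ ⟨q.comp p.1, fun t ht => by
      have := p.2.1 t ht
      simpa using this⟩)
    (fun a b h => by
      obtain ⟨H, h0, h1, hb⟩ := h
      exact Quot.sound ⟨q.comp H,
        fun t => by simp [h0 t],
        fun t => by simp [h1 t],
        fun s t ht => by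
          have := (hb s).1 t ht
          simpa using this⟩)

/-- `q` is a quasifibration: for all `y`, basepoints in the fiber, and `n ≥ 1`, the
natural map `π_n(X, q⁻¹(y), x₀) → π_n(Y, y)` is a bijection. -/
def IsQuasifibration {X Y : Type*} [TopologicalSpace X] [TopologicalSpace Y]
    (q : C(X, Y)) : Prop :=
  ∀ (y : Y) (x : X), q x = y → ∀ n : ℕ, 1 ≤ n → Function.Bijective (qStar q y x n)

/-!
Since `E` is contractible, every map from the boundary of a cube into `E` extends over the
cube: cone the boundary off to the centre along a contraction of `E`. Surjectivity and
injectivity of the connecting map `π_{n+1}(E, F, x₀) → π_n(F, x₀)`, which restricts a relative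
map to its free face, are both such extension problems, on `I^{n+1}` and on `I^{n+1} × I`.
Composing with the bijection `π_{n+1}(E, F, x₀) ≅ π_{n+1}(B, b)` that defines a quasifibration
gives `π_n(F, x₀) ≅ π_{n+1}(B, b)`.
-/

theorem isClosed_cbBoundary (n : ℕ) : IsClosed (cbBoundary n) := by
  have : cbBoundary n = ⋃ i, (fun t : Cb n => t i) ⁻¹' {0, 1} := by
    ext t; simp [cbBoundary]
  rw [this]
  exact isClosed_iUnion_of_finite fun i => (Set.toFinite _).isClosed.preimage (continuous_apply i)

theorem mem_cbBoundary_succ_iff {n : ℕ} {u : Cb (n + 1)} :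
    u ∈ cbBoundary (n + 1) ↔
      Fin.init u ∈ cbBoundary n ∨ u (Fin.last n) = 0 ∨ u (Fin.last n) = 1 := by
  simp [cbBoundary, Fin.exists_fin_succ', Fin.init]

theorem mem_Jset_succ_iff {n : ℕ} {u : Cb (n + 1)} :
    u ∈ Jset (n + 1) ↔ Fin.init u ∈ cbBoundary n ∨ u (Fin.last n) = 1 := by
  have (i : Fin n) : (i : ℕ) ≠ n := i.isLt.ne
  simp [Jset, cbBoundary, Fin.exists_fin_succ', Fin.init, this]

theorem Jset_subset_cbBoundary (n : ℕ) : Jset n ⊆ cbBoundary n := by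
  rintro t (⟨i, -, hi⟩ | ⟨i, -, hi⟩)
  exacts [⟨i, hi⟩, ⟨i, Or.inr hi⟩]

theorem cbBoundary_succ_subset (n : ℕ) :
    cbBoundary (n + 1) ⊆ {u | u (Fin.last n) = 0} ∪ Jset (n + 1) := fun u hu => by
  rcases mem_cbBoundary_succ_iff.1 hu with h | h | h
  exacts [Or.inr (mem_Jset_succ_iff.2 (Or.inl h)), Or.inl h,
    Or.inr (mem_Jset_succ_iff.2 (Or.inr h))]

theorem isClosed_Jset_succ (n : ℕ) : IsClosed (Jset (n + 1)) := by
  have : Jset (n + 1) = {u : Cb (n + 1) | Fin.init u ∈ cbBoundary n ∨ u (Fin.last n) = 1} :=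
    Set.ext fun _ => mem_Jset_succ_iff
  rw [this]
  exact ((isClosed_cbBoundary n).preimage (by fun_prop)).union
    (isClosed_eq (by fun_prop) continuous_const)

section HomotopyGroups

variable {X : Type*} [TopologicalSpace X] {x : X} {n : ℕ}

theorem basedHtpy_iff_homotopicRel {f g : BasedLoop n X x} :
    BasedHtpy f g ↔ f.1.HomotopicRel g.1 (cbBoundary n) := by
  constructor
  · rintro ⟨H, h0, h1, hb⟩
    exact ⟨{ toFun := fun p => H (p.2, p.1)
             map_zero_left := h0
             map_one_left := h1
             prop' := fun s t ht => (hb s t ht).trans (f.2 t ht).symm }⟩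
  · rintro ⟨H⟩
    exact ⟨H.toContinuousMap.comp ⟨Prod.swap, continuous_swap⟩, H.apply_zero, H.apply_one,
      fun s t ht => (H.eq_fst s ht).trans (f.2 t ht)⟩

theorem basedHtpy_equivalence : Equivalence (@BasedHtpy n X _ x) := by
  have : @BasedHtpy n X _ x = Function.onFun
      (fun f g : C(Cb n, X) => f.HomotopicRel g (cbBoundary n)) Subtype.val := by
    ext f g
    exact basedHtpy_iff_homotopicRel
  exact this ▸ ContinuousMap.HomotopicRel.equivalence.comap _

end HomotopyGroups

noncomputable def centerDist {k : ℕ} (t : Cb (k + 1)) : ℝ :=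
  Finset.univ.sup' Finset.univ_nonempty fun i => |2 * (t i : ℝ) - 1|

theorem continuous_centerDist {k : ℕ} : Continuous (@centerDist k) :=
  Continuous.finset_sup'_apply _ fun i _ => by fun_prop

theorem abs_le_centerDist {k : ℕ} (t : Cb (k + 1)) (i : Fin (k + 1)) :
    |2 * (t i : ℝ) - 1| ≤ centerDist t :=
  Finset.le_sup' (fun i => |2 * (t i : ℝ) - 1|) (Finset.mem_univ i)

theorem exists_abs_eq_centerDist {k : ℕ} (t : Cb (k + 1)) :
    ∃ i, |2 * (t i : ℝ) - 1| = centerDist t := by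
  obtain ⟨i, -, hi⟩ := Finset.exists_mem_eq_sup' Finset.univ_nonempty
    fun i => |2 * (t i : ℝ) - 1|
  exact ⟨i, hi.symm⟩

theorem centerDist_nonneg {k : ℕ} (t : Cb (k + 1)) : 0 ≤ centerDist t :=
  (abs_nonneg _).trans (abs_le_centerDist t 0)

theorem abs_two_mul_sub_one_le_one (x : I) : |2 * (x : ℝ) - 1| ≤ 1 := by
  rw [abs_le]; constructor <;> linarith [x.2.1, x.2.2]

theorem abs_two_mul_sub_one_eq_one_iff {x : I} : |2 * (x : ℝ) - 1| = 1 ↔ x = 0 ∨ x = 1 := by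
  constructor
  · intro h
    rcases abs_eq zero_le_one |>.mp h with h | h
    · exact Or.inr (Subtype.ext (by push_cast; linarith))
    · exact Or.inl (Subtype.ext (by push_cast; linarith))
  · rintro (rfl | rfl) <;> norm_num

theorem mem_cbBoundary_iff_centerDist_eq_one {k : ℕ} {t : Cb (k + 1)} :
    t ∈ cbBoundary (k + 1) ↔ centerDist t = 1 := by
  constructor
  · rintro ⟨i, hi⟩
    refine le_antisymm (Finset.sup'_le _ _ fun j _ => abs_two_mul_sub_one_le_one (t j)) ?_
    exact (abs_two_mul_sub_one_eq_one_iff.2 hi).symm.le.trans (abs_le_centerDist t i)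
  · intro h
    obtain ⟨i, hi⟩ := exists_abs_eq_centerDist t
    exact ⟨i, abs_two_mul_sub_one_eq_one_iff.1 (hi.trans h)⟩

noncomputable def radialProj {k : ℕ} (t : Cb (k + 1)) : Cb (k + 1) := fun i =>
  Set.projIcc 0 1 zero_le_one (1 / 2 + ((t i : ℝ) - 1 / 2) / centerDist t)

theorem radialProj_eq_self {k : ℕ} {t : Cb (k + 1)} (h : centerDist t = 1) :
    radialProj t = t := by
  funext i
  simp [radialProj, h]

theorem radialProj_mem_cbBoundary {k : ℕ} {t : Cb (k + 1)} (h : centerDist t ≠ 0) :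
    radialProj t ∈ cbBoundary (k + 1) := by
  obtain ⟨i, hi⟩ := exists_abs_eq_centerDist t
  refine ⟨i, ?_⟩
  rcases (abs_eq (centerDist_nonneg t)).1 hi with h' | h'
  · right
    have : 1 / 2 + ((t i : ℝ) - 1 / 2) / centerDist t = 1 := by field_simp; linarith
    show Set.projIcc _ _ _ _ = 1
    rw [this, Set.projIcc_right]; rfl
  · left
    have : 1 / 2 + ((t i : ℝ) - 1 / 2) / centerDist t = 0 := by field_simp; linarith
    show Set.projIcc _ _ _ _ = 0
    rw [this, Set.projIcc_left]; rfl

theorem continuousOn_radialProj {k : ℕ} :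
    ContinuousOn (@radialProj k) {t | centerDist t ≠ 0} :=
  continuousOn_pi.2 fun _ => continuous_projIcc.comp_continuousOn
    (continuousOn_const.add ((by fun_prop : Continuous _).continuousOn.div
      continuous_centerDist.continuousOn fun _ ht => ht))

section

variable {E : Type*} [TopologicalSpace E]

theorem exists_extension_of_continuousOn_cbBoundary [ContractibleSpace E] {k : ℕ}
    {D : Cb (k + 1) → E} (hD : ContinuousOn D (cbBoundary (k + 1))) :
    ∃ G : C(Cb (k + 1), E), Set.EqOn G D (cbBoundary (k + 1)) := by
  obtain ⟨c, ⟨H⟩⟩ := id_nullhomotopic E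
  let r : Cb (k + 1) → I := fun t => Set.projIcc 0 1 zero_le_one (1 - centerDist t)
  let G : Cb (k + 1) → E := fun t => H (r t, D (radialProj t))
  have hr : Continuous r := continuous_projIcc.comp (continuous_const.sub continuous_centerDist)
  have hG_off_center : ContinuousOn G {t | centerDist t ≠ 0} :=
    H.continuous.comp_continuousOn (hr.continuousOn.prodMk
      (hD.comp continuousOn_radialProj fun _ => radialProj_mem_cbBoundary))
  -- `H` is constant on `{1} × E`, and `D (radialProj t)` stays in the compact `D '' ∂I^{k+1}`.
  have hG_center (w : Cb (k + 1)) (hw : centerDist w = 0) : ContinuousAt G w := by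
    have hG_eq (t) (ht : centerDist t = 0) : G t = c := by simp [G, r, ht]
    refine fun U hU => Filter.mem_map.2 ?_
    obtain ⟨V, hVU, hVo, hcV⟩ := mem_nhds_iff.1 (hG_eq w hw ▸ hU)
    obtain ⟨v, u, hv, -, h1v, hKu, huv⟩ :=
      generalized_tube_lemma (isCompact_singleton (x := (1 : I)))
        ((isClosed_cbBoundary _).isCompact.image_of_continuousOn hD)
        (hVo.preimage H.continuous) fun ⟨s, e⟩ ⟨hs, _⟩ => by
          obtain rfl : s = 1 := hs
          simpa using hcV
    have hw_mem : w ∈ r ⁻¹' v := by simpa [r, hw] using h1v rfl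
    filter_upwards [(hv.preimage hr).mem_nhds hw_mem] with z hz
    apply hVU
    by_cases hz0 : centerDist z = 0
    · exact hG_eq z hz0 ▸ hcV
    · exact huv ⟨hz, hKu ⟨_, radialProj_mem_cbBoundary hz0, rfl⟩⟩
  refine ⟨⟨G, continuous_iff_continuousAt.2 fun w => ?_⟩, fun t ht => ?_⟩
  · by_cases hw : centerDist w = 0
    · exact hG_center w hw
    · exact hG_off_center.continuousAt
        ((isOpen_ne_fun continuous_centerDist continuous_const).mem_nhds hw)
  · have h1 := mem_cbBoundary_iff_centerDist_eq_one.1 ht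
    simp [G, r, h1, radialProj_eq_self h1]

theorem exists_extension_of_continuousOn_prismBoundary [ContractibleSpace E] {k : ℕ}
    {D : Cb k × I → E}
    (hD : ContinuousOn D {p | p.1 ∈ cbBoundary k ∨ p.2 = 0 ∨ p.2 = 1}) :
    ∃ H : C(Cb k × I, E), ∀ p, p.1 ∈ cbBoundary k ∨ p.2 = 0 ∨ p.2 = 1 → H p = D p := by
  obtain ⟨G, hG⟩ := exists_extension_of_continuousOn_cbBoundary (D := fun u : Cb (k + 1) =>
    D (Fin.init u, u (Fin.last k)))
    (hD.comp (by fun_prop) fun _ => mem_cbBoundary_succ_iff.1)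
  refine ⟨G.comp ⟨fun p => Fin.snoc p.1 p.2, by fun_prop⟩, fun p hp => ?_⟩
  have hp' : (Fin.snoc p.1 p.2 : Cb (k + 1)) ∈ cbBoundary (k + 1) :=
    mem_cbBoundary_succ_iff.2 (by simpa using hp)
  simpa using hG hp'

theorem continuousOn_prismBoundary_of_faces {n : ℕ} {D : Cb (n + 1) × I → E}
    (h₀ : ContinuousOn D {p | p.2 = 0}) (h₁ : ContinuousOn D {p | p.2 = 1})
    (hbottom : ContinuousOn D {p | p.1 (Fin.last n) = 0})
    (hJ : ContinuousOn D {p | p.1 ∈ Jset (n + 1)}) :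
    ContinuousOn D {p | p.1 ∈ cbBoundary (n + 1) ∨ p.2 = 0 ∨ p.2 = 1} := by
  have hclosed_snd (c : I) : IsClosed {p : Cb (n + 1) × I | p.2 = c} :=
    isClosed_eq continuous_snd continuous_const
  have hclosed_bottom : IsClosed {p : Cb (n + 1) × I | p.1 (Fin.last n) = 0} :=
    isClosed_eq (by fun_prop) continuous_const
  have hclosed_J : IsClosed {p : Cb (n + 1) × I | p.1 ∈ Jset (n + 1)} :=
    (isClosed_Jset_succ n).preimage continuous_fst
  refine ContinuousOn.mono (s := ({p | p.2 = 0} ∪ {p | p.2 = 1}) ∪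
    ({p | p.1 (Fin.last n) = 0} ∪ {p | p.1 ∈ Jset (n + 1)})) ?_ ?_
  · exact (h₀.union_of_isClosed h₁ (hclosed_snd 0) (hclosed_snd 1)).union_of_isClosed
      (hbottom.union_of_isClosed hJ hclosed_bottom hclosed_J)
      ((hclosed_snd 0).union (hclosed_snd 1)) (hclosed_bottom.union hclosed_J)
  · rintro p (hp | hp | hp)
    exacts [Or.inr (cbBoundary_succ_subset n hp), Or.inl (Or.inl hp), Or.inl (Or.inr hp)]

section BoundaryMap

variable {F : Set E} {x₀ : F} {n : ℕ}

def bottomFace (G : RelLoop (n + 1) E F x₀) : BasedLoop n F x₀ :=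
  ⟨⟨fun t => ⟨G.1 (Fin.snoc t 0), G.2.1 _ (mem_cbBoundary_succ_iff.2 (by simp))⟩,
      (G.1.continuous.comp (by fun_prop)).subtype_mk _⟩,
    fun t ht => Subtype.ext (G.2.2 _ (mem_Jset_succ_iff.2 (by simp [ht])))⟩

theorem basedHtpy_bottomFace {G₀ G₁ : RelLoop (n + 1) E F x₀} (h : RelHtpy G₀ G₁) :
    BasedHtpy (bottomFace G₀) (bottomFace G₁) := by
  obtain ⟨H, h0, h1, hb⟩ := h
  exact ⟨⟨fun p => ⟨H (Fin.snoc p.1 0, p.2),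
        (hb p.2).1 _ (mem_cbBoundary_succ_iff.2 (by simp))⟩,
      (H.continuous.comp (by fun_prop)).subtype_mk _⟩,
    fun t => Subtype.ext (h0 _), fun t => Subtype.ext (h1 _),
    fun s t ht => Subtype.ext ((hb s).2 _ (mem_Jset_succ_iff.2 (by simp [ht])))⟩

variable (F x₀ n) in
def boundaryMap : RelPi (n + 1) E F x₀ → PiGrp n F x₀ :=
  Quot.lift (fun G => Quot.mk _ (bottomFace G)) fun _ _ h => Quot.sound (basedHtpy_bottomFace h)

theorem exists_bottomFace_eq [ContractibleSpace E] (f : BasedLoop n F x₀) :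
    ∃ G : RelLoop (n + 1) E F x₀, bottomFace G = f := by
  let D : Cb n × I → E := fun p => if p.2 = 0 then f.1 p.1 else x₀
  have hD_base (p : Cb n × I) (hp : p.1 ∈ cbBoundary n ∨ p.2 = 1) : D p = x₀ := by
    rcases hp with hp | hp
    · by_cases h0 : p.2 = 0 <;> simp [D, h0, f.2 _ hp]
    · simp [D, hp]
  have hD : ContinuousOn D {p | p.1 ∈ cbBoundary n ∨ p.2 = 0 ∨ p.2 = 1} := by
    refine ContinuousOn.mono (s := {p | p.2 = 0} ∪ {p | p.1 ∈ cbBoundary n ∨ p.2 = 1}) ?_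
      (by rintro p (h | h | h) <;> simp [h])
    exact ContinuousOn.union_of_isClosed
      ((by fun_prop : Continuous fun p : Cb n × I => (f.1 p.1 : E)).continuousOn.congr
        fun p hp => if_pos hp)
      (continuousOn_const.congr hD_base)
      (isClosed_eq continuous_snd continuous_const)
      (((isClosed_cbBoundary n).preimage continuous_fst).union
        (isClosed_eq continuous_snd continuous_const))
  obtain ⟨H, hH⟩ := exists_extension_of_continuousOn_prismBoundary hD
  refine ⟨⟨H.comp ⟨fun u => (Fin.init u, u (Fin.last n)), by fun_prop⟩, fun u hu => ?_,
    fun u hu => ?_⟩, ?_⟩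
  · change H (Fin.init u, u (Fin.last n)) ∈ F
    rw [hH (Fin.init u, u (Fin.last n)) (mem_cbBoundary_succ_iff.1 hu)]
    dsimp only [D]
    split_ifs
    exacts [(f.1 _).2, x₀.2]
  · exact (hH _ (mem_cbBoundary_succ_iff.1 (Jset_subset_cbBoundary _ hu))).trans
      (hD_base _ (mem_Jset_succ_iff.1 hu))
  · ext t
    simp [bottomFace, hH (t, 0) (by simp), D]

theorem relHtpy_of_basedHtpy_bottomFace [ContractibleSpace E] {G₀ G₁ : RelLoop (n + 1) E F x₀}
    (h : BasedHtpy (bottomFace G₀) (bottomFace G₁)) : RelHtpy G₀ G₁ := by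
  obtain ⟨K, hK0, hK1, hKb⟩ := h
  let D : Cb (n + 1) × I → E := fun p =>
    if p.2 = 0 then G₀.1 p.1 else if p.2 = 1 then G₁.1 p.1
    else if p.1 (Fin.last n) = 0 then K (Fin.init p.1, p.2) else x₀
  have hD_bottom (p : Cb (n + 1) × I) (hp : p.1 (Fin.last n) = 0) :
      D p = K (Fin.init p.1, p.2) := by
    have hsnoc : Fin.snoc (Fin.init p.1) 0 = p.1 := hp ▸ Fin.snoc_init_self p.1
    by_cases h0 : p.2 = 0
    · simp only [D, h0, if_true, hK0]; exact congrArg G₀.1 hsnoc.symm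
    by_cases h1 : p.2 = 1
    · simp only [D, h1, if_false, if_true, hK1, one_ne_zero]; exact congrArg G₁.1 hsnoc.symm
    simp [D, h0, h1, hp]
  have hD_J (p : Cb (n + 1) × I) (hp : p.1 ∈ Jset (n + 1)) : D p = x₀ := by
    by_cases hb : p.1 (Fin.last n) = 0
    · rw [hD_bottom p hb, hKb _ _ ((mem_Jset_succ_iff.1 hp).resolve_right (by simp [hb]))]
    · simp [D, G₀.2.2 _ hp, G₁.2.2 _ hp, hb]
  have hD : ContinuousOn D {p | p.1 ∈ cbBoundary (n + 1) ∨ p.2 = 0 ∨ p.2 = 1} :=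
    continuousOn_prismBoundary_of_faces
      ((G₀.1.continuous.comp continuous_fst).continuousOn.congr fun p hp => if_pos hp)
      ((G₁.1.continuous.comp continuous_fst).continuousOn.congr fun p hp => by
        simp [D, show p.2 = 1 from hp])
      ((by fun_prop : Continuous fun p : Cb (n + 1) × I => (K (Fin.init p.1, p.2) : E))
        |>.continuousOn.congr hD_bottom)
      (continuousOn_const.congr hD_J)
  obtain ⟨H, hH⟩ := exists_extension_of_continuousOn_prismBoundary hD
  refine ⟨H, fun u => by simp [hH (u, 0) (by simp), D], fun u => by simp [hH (u, 1) (by simp), D],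
    fun s => ⟨fun u hu => ?_, fun u hu => ?_⟩⟩
  · rw [hH (u, s) (Or.inl hu)]
    dsimp only [D]
    split_ifs
    exacts [G₀.2.1 u hu, G₁.2.1 u hu, (K _).2, x₀.2]
  · exact (hH (u, s) (Or.inl (Jset_subset_cbBoundary _ hu))).trans (hD_J _ hu)

theorem boundaryMap_bijective [ContractibleSpace E] :
    Function.Bijective (boundaryMap F x₀ n) := by
  refine ⟨fun a b => ?_, fun f => ?_⟩
  · induction a using Quot.ind with | _ G₀ => ?_
    induction b using Quot.ind with | _ G₁ => ?_
    intro h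
    exact Quot.sound (relHtpy_of_basedHtpy_bottomFace
      (basedHtpy_equivalence.eqvGen_iff.1 (Quot.eqvGen_exact h)))
  · induction f using Quot.ind with | _ f => ?_
    obtain ⟨G, hG⟩ := exists_bottomFace_eq f
    exact ⟨Quot.mk _ G, congrArg (Quot.mk _) hG⟩

end BoundaryMap

end

theorem stmt9_general {E B : Type*} [TopologicalSpace E] [TopologicalSpace B]
    (q : C(E, B)) (hq : IsQuasifibration q)
    [ContractibleSpace E] (b : B) :
    ∀ (x₀ : ↥(q ⁻¹' ({b} : Set B))) (n : ℕ),
      Nonempty (PiGrp n (↥(q ⁻¹' ({b} : Set B))) x₀ ≃ PiGrp (n + 1) B b) :=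
  fun x₀ n => ⟨(Equiv.ofBijective _ boundaryMap_bijective).symm.trans
    (Equiv.ofBijective _ (hq b x₀ x₀.2 (n + 1) n.succ_pos))⟩

/-- If `q : E → B` is a quasifibration with (weakly) contractible total space `E` over a
path-connected base `B` with basepoint `b`, then the fiber `F = q⁻¹(b)` is weakly
homotopy equivalent to the loop space of `B`: `π_n(F) ≅ π_{n+1}(B)` for all `n ≥ 0`
(and all basepoints of the fiber). -/
theorem stmt9 {E B : Type*} [TopologicalSpace E] [TopologicalSpace B]
    (q : C(E, B)) (hq : IsQuasifibration q)
    [ContractibleSpace E] [PathConnectedSpace B] (b : B) :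
    ∀ (x₀ : ↥(q ⁻¹' ({b} : Set B))) (n : ℕ),
      Nonempty (PiGrp n (↥(q ⁻¹' ({b} : Set B))) x₀ ≃ PiGrp (n + 1) B b) :=
  stmt9_general q hq b
end

section
/- Let G be a self-adjoint operator with finite-dimensional domain D in a Hilbert space, with spectral decomposition G = Σ_λ λ π_{G_λ}, and suppose an operator f with f² = 1 acts on ker(G), splitting it as ker(G)⁺ ⊕ ker(G)⁻ (the ±1 eigenspaces of f). Then the family H_t(G) := (1/(1−t)) G + (t/(1−t)) π_{ker G} f, for t ∈ [0,1), is a path of self-adjoint operators on D starting at G whose nonzero eigenvalues are λ/(1−t) (λ ≠ 0 an eigenvalue of G) together with ±t/(1−t) on ker(G)^±; in particular every eigenvalue of H_t(G) tends to ±∞ as t → 1. -/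
open Filter Topology

/-- The path `H_t(G) = (1/(1-t))·G + (t/(1-t))·π_{ker G}·f`. -/
noncomputable def pathOp {H : Type*} [NormedAddCommGroup H] [InnerProductSpace ℂ H]
    [FiniteDimensional ℂ H] (G f : Module.End ℂ H) (t : ℝ) : Module.End ℂ H :=
  (((1 / (1 - t) : ℝ) : ℂ) • G) +
    (((t / (1 - t) : ℝ) : ℂ) •
      (((LinearMap.ker G).subtype ∘ₗ (Submodule.orthogonalProjectionOnto (LinearMap.ker G)).toLinearMap) ∘ₗ f))

/-
On `ker G` the operator `G` vanishes while `π_{ker G} f` acts as `f`; on an eigenvector of `G`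
with nonzero eigenvalue, which is orthogonal to `ker G`, the term `π_{ker G} f` vanishes because
`f` commutes with `π_{ker G}`. So `H_t(G)` acts on these vectors by the scalars
`λ/(1-t)` and `±t/(1-t)`. Self-adjointness holds because `π_{ker G} f` is a product of commuting
self-adjoint operators, and the eigenvalues diverge since `(1-t)⁻¹ → ∞` as `t → 1⁻`.
-/

theorem Submodule.subtype_comp_orthogonalProjectionOnto {𝕜 E : Type*} [RCLike 𝕜]
    [NormedAddCommGroup E] [InnerProductSpace 𝕜 E] (K : Submodule 𝕜 E)
    [K.HasOrthogonalProjection] :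
    K.subtype ∘ₗ K.orthogonalProjectionOnto.toLinearMap = K.starProjection :=
  rfl

theorem LinearMap.IsSymmetric.mem_orthogonal_ker_of_apply_eq_smul {𝕜 E : Type*} [RCLike 𝕜]
    [NormedAddCommGroup E] [InnerProductSpace 𝕜 E] {T : E →ₗ[𝕜] E} (hT : T.IsSymmetric)
    {μ : 𝕜} (hμ : μ ≠ 0) {x : E} (hx : T x = μ • x) : x ∈ (LinearMap.ker T)ᗮ := by
  have hx_range : x ∈ LinearMap.range T := ⟨μ⁻¹ • x, by rw [map_smul, hx, inv_smul_smul₀ hμ]⟩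
  rw [← hT.orthogonal_range]
  exact (LinearMap.range T).le_orthogonal_orthogonal hx_range

theorem tendsto_inv_sub_nhdsLT (a : ℝ) : Tendsto (fun t : ℝ => (a - t)⁻¹) (𝓝[<] a) atTop := by
  refine tendsto_inv_nhdsGT_zero.comp (tendsto_nhdsWithin_iff.2 ⟨?_, ?_⟩)
  · simpa using ((continuous_sub_left a).tendsto a).mono_left nhdsWithin_le_nhds
  · filter_upwards [self_mem_nhdsWithin] with t ht
    exact sub_pos.2 (Set.mem_Iio.1 ht)

section PathOp

variable {H : Type*} [NormedAddCommGroup H] [InnerProductSpace ℂ H] [FiniteDimensional ℂ H]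
  (G f : Module.End ℂ H)

theorem pathOp_eq_starProjection (t : ℝ) :
    pathOp G f t = ((1 / (1 - t) : ℝ) : ℂ) • G +
      ((t / (1 - t) : ℝ) : ℂ) • ((LinearMap.ker G).starProjection * f) := by
  rw [pathOp, Submodule.subtype_comp_orthogonalProjectionOnto, Module.End.mul_eq_comp]

theorem pathOp_zero : pathOp G f 0 = G := by
  simp [pathOp_eq_starProjection]

theorem pathOp_apply_of_mem_ker {x : H} (hx : x ∈ LinearMap.ker G) (t : ℝ) :
    pathOp G f t x = ((t / (1 - t) : ℝ) : ℂ) • (LinearMap.ker G).starProjection (f x) := by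
  rw [LinearMap.mem_ker] at hx
  simp [pathOp_eq_starProjection, hx]

variable {G f}

theorem pathOp_isSymmetric (hG : G.IsSymmetric) (hf : f.IsSymmetric)
    (hcomm : Commute ((LinearMap.ker G).starProjection : Module.End ℂ H) f) (t : ℝ) :
    (pathOp G f t).IsSymmetric := by
  rw [pathOp_eq_starProjection]
  exact (hG.smul (RCLike.conj_ofReal _)).add
    (((LinearMap.ker G).starProjection_isSymmetric.mul_of_commute hf hcomm).smul
      (RCLike.conj_ofReal _))

theorem pathOp_apply_of_apply_eq_smul (hG : G.IsSymmetric)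
    (hcomm : Commute ((LinearMap.ker G).starProjection : Module.End ℂ H) f) {r : ℝ} (hr : r ≠ 0)
    {x : H} (hx : G x = (r : ℂ) • x) (t : ℝ) :
    pathOp G f t x = ((r / (1 - t) : ℝ) : ℂ) • x := by
  have hπx : (LinearMap.ker G).starProjection x = 0 :=
    (Submodule.starProjection_apply_eq_zero_iff _).2
      (hG.mem_orthogonal_ker_of_apply_eq_smul (Complex.ofReal_ne_zero.2 hr) hx)
  have hπfx : ((LinearMap.ker G).starProjection * f) x = 0 := by
    rw [hcomm.eq, Module.End.mul_apply, ContinuousLinearMap.coe_coe, hπx, map_zero]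
  rw [pathOp_eq_starProjection, LinearMap.add_apply, LinearMap.smul_apply, LinearMap.smul_apply,
    hπfx, smul_zero, add_zero, hx, smul_smul, ← Complex.ofReal_mul, one_div_mul_eq_div]

theorem pathOp_apply_of_mem_ker_of_apply_eq_self {x : H} (hx : x ∈ LinearMap.ker G)
    (hfx : f x = x) (t : ℝ) : pathOp G f t x = ((t / (1 - t) : ℝ) : ℂ) • x := by
  rw [pathOp_apply_of_mem_ker G f hx, hfx, Submodule.starProjection_eq_self_iff.2 hx]

theorem pathOp_apply_of_mem_ker_of_apply_eq_neg {x : H} (hx : x ∈ LinearMap.ker G)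
    (hfx : f x = -x) (t : ℝ) : pathOp G f t x = -(((t / (1 - t) : ℝ) : ℂ) • x) := by
  rw [pathOp_apply_of_mem_ker G f hx, hfx, map_neg, Submodule.starProjection_eq_self_iff.2 hx,
    smul_neg]

end PathOp

theorem stmt18_general {H : Type*} [NormedAddCommGroup H] [InnerProductSpace ℂ H]
    [FiniteDimensional ℂ H]
    (G f : Module.End ℂ H) (hGsym : G.IsSymmetric) (hfsym : f.IsSymmetric)
    (hcomm : (((LinearMap.ker G).subtype ∘ₗ (Submodule.orthogonalProjectionOnto (LinearMap.ker G)).toLinearMap)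
        ∘ₗ f) = f ∘ₗ ((LinearMap.ker G).subtype ∘ₗ (Submodule.orthogonalProjectionOnto (LinearMap.ker G)).toLinearMap)) :
    (pathOp G f 0 = G) ∧
    (∀ t : ℝ, 0 ≤ t → t < 1 →
      ((pathOp G f t).IsSymmetric ∧
      (∀ (r : ℝ) (x : H), x ≠ 0 → r ≠ 0 → G x = (r : ℂ) • x →
        pathOp G f t x = (((r / (1 - t) : ℝ)) : ℂ) • x) ∧
      (∀ x ∈ LinearMap.ker G, x ≠ 0 → f x = x →
        pathOp G f t x = (((t / (1 - t) : ℝ)) : ℂ) • x) ∧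
      (∀ x ∈ LinearMap.ker G, x ≠ 0 → f x = -x →
        pathOp G f t x = -((((t / (1 - t) : ℝ)) : ℂ) • x)))) ∧
    Tendsto (fun t : ℝ => t / (1 - t)) (nhdsWithin 1 (Set.Iio 1)) atTop ∧
    (∀ r : ℝ, r ≠ 0 →
      Tendsto (fun t : ℝ => |r| / (1 - t)) (nhdsWithin 1 (Set.Iio 1)) atTop) := by
  rw [Submodule.subtype_comp_orthogonalProjectionOnto] at hcomm
  have hcomm' : Commute ((LinearMap.ker G).starProjection : Module.End ℂ H) f := hcomm
  refine ⟨pathOp_zero G f, fun t _ _ => ⟨pathOp_isSymmetric hGsym hfsym hcomm' t,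
    fun r x _ hr hx => pathOp_apply_of_apply_eq_smul hGsym hcomm' hr hx t,
    fun x hx _ hfx => pathOp_apply_of_mem_ker_of_apply_eq_self hx hfx t,
    fun x hx _ hfx => pathOp_apply_of_mem_ker_of_apply_eq_neg hx hfx t⟩, ?_, fun r hr => ?_⟩
  · -- `t / (1 - t) = (1 - t)⁻¹ - 1`
    refine (tendsto_atTop_add_const_right _ (-1) (tendsto_inv_sub_nhdsLT 1)).congr' ?_
    filter_upwards [self_mem_nhdsWithin] with t ht
    field_simp [(sub_pos.2 (Set.mem_Iio.1 ht)).ne']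
    ring
  · simpa only [div_eq_mul_inv] using (tendsto_inv_sub_nhdsLT 1).const_mul_atTop (abs_pos.2 hr)

/-- For a self-adjoint operator `G` on a finite-dimensional space and a self-adjoint
involution `f` of `ker G` commuting with the orthogonal projection `π_{ker G}`, the family
`H_t(G) = (1/(1-t))G + (t/(1-t))π_{ker G} f`, `t ∈ [0,1)`, is a path of self-adjoint
operators starting at `G`, whose nonzero eigenvalues are `λ/(1-t)` for `λ ≠ 0` an
eigenvalue of `G`, together with `±t/(1-t)` on `ker(G)^±`; every eigenvalue tends to
`±∞` as `t → 1`. -/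
theorem stmt18 {H : Type*} [NormedAddCommGroup H] [InnerProductSpace ℂ H]
    [FiniteDimensional ℂ H]
    (G f : Module.End ℂ H) (hGsym : G.IsSymmetric) (hfsym : f.IsSymmetric)
    (hf2 : ∀ x ∈ LinearMap.ker G, f (f x) = x)
    (hfker : ∀ x ∈ LinearMap.ker G, f x ∈ LinearMap.ker G)
    (hcomm : (((LinearMap.ker G).subtype ∘ₗ (Submodule.orthogonalProjectionOnto (LinearMap.ker G)).toLinearMap)
        ∘ₗ f) = f ∘ₗ ((LinearMap.ker G).subtype ∘ₗ (Submodule.orthogonalProjectionOnto (LinearMap.ker G)).toLinearMap)) :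
    (pathOp G f 0 = G) ∧
    (∀ t : ℝ, 0 ≤ t → t < 1 →
      ((pathOp G f t).IsSymmetric ∧
      (∀ (r : ℝ) (x : H), x ≠ 0 → r ≠ 0 → G x = (r : ℂ) • x →
        pathOp G f t x = (((r / (1 - t) : ℝ)) : ℂ) • x) ∧
      (∀ x ∈ LinearMap.ker G, x ≠ 0 → f x = x →
        pathOp G f t x = (((t / (1 - t) : ℝ)) : ℂ) • x) ∧
      (∀ x ∈ LinearMap.ker G, x ≠ 0 → f x = -x →
        pathOp G f t x = -((((t / (1 - t) : ℝ)) : ℂ) • x)))) ∧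
    Tendsto (fun t : ℝ => t / (1 - t)) (nhdsWithin 1 (Set.Iio 1)) atTop ∧
    (∀ r : ℝ, r ≠ 0 →
      Tendsto (fun t : ℝ => |r| / (1 - t)) (nhdsWithin 1 (Set.Iio 1)) atTop) :=
  stmt18_general G f hGsym hfsym hcomm
end
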